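/- Consider a one-dimensional wireless network with n ≥ 2 distinct stations at positions x₁,…,x_n ∈ ℝ, powers P₁,…,P_n > 0, noise N ≥ 0, threshold β ≥ 1 and path-loss exponent 2. Then the total number of connected components, summed over the reception zones H₁,…,H_n (each a subset of ℝ), is at most 2n − 1. -/

import Mathlib

open Finset

/-- SINR of station `i` at point `t` in a one-dimensional network with
positions `x`, powers `P`, noise `N` and path-loss exponent 2. -/
noncomputable def sinr1 {n : ℕ} (x P : Fin n → ℝ) (N : ℝ) (i : Fin n) (t : ℝ) : ℝ :=
  (P i / (t - x i) ^ 2) /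
    ((∑ j ∈ Finset.univ.erase i, P j / (t - x j) ^ 2) + N)

/-- The reception zone of station `i` in a one-dimensional network. -/
noncomputable def recZone1 {n : ℕ} (x P : Fin n → ℝ) (N β : ℝ) (i : Fin n) : Set ℝ :=
  {t | (∀ j, t ≠ x j) ∧ β ≤ sinr1 x P N i t} ∪ {x i}

/-- The set of connected components (cells) of a set `S`. -/
def componentsOf {X : Type*} [TopologicalSpace X] (S : Set X) : Set (Set X) :=
  {C | ∃ t ∈ S, C = connectedComponentIn S t}

/-! ### Auxiliary lemmas -/

section Components

open Set

lemma compOf_nonempty {S C : Set ℝ} (h : C ∈ componentsOf S) : C.Nonempty := by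
  obtain ⟨t, ht, rfl⟩ := h
  exact ⟨t, mem_connectedComponentIn ht⟩

lemma compOf_subset {S C : Set ℝ} (h : C ∈ componentsOf S) : C ⊆ S := by
  obtain ⟨t, _, rfl⟩ := h
  exact connectedComponentIn_subset S t

lemma compOf_eq {S C : Set ℝ} (h : C ∈ componentsOf S) {t : ℝ} (ht : t ∈ C) :
    C = connectedComponentIn S t := by
  obtain ⟨u, hu, rfl⟩ := h
  exact connectedComponentIn_eq ht

lemma compOf_ordConnected {S C : Set ℝ} (h : C ∈ componentsOf S) : C.OrdConnected := by
  obtain ⟨t, _, rfl⟩ := h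
  exact isPreconnected_connectedComponentIn.ordConnected

lemma compOf_subset_singleton {S : Set ℝ} (hS : IsPreconnected S) :
    componentsOf S ⊆ {S} := by
  rintro C ⟨t, ht, rfl⟩
  have : connectedComponentIn S t = S :=
    subset_antisymm (connectedComponentIn_subset S t)
      (hS.subset_connectedComponentIn ht subset_rfl)
  simp [this]

lemma compOf_finite_of_preconnected {S : Set ℝ} (hS : IsPreconnected S) :
    (componentsOf S).Finite :=
  (Set.finite_singleton S).subset (compOf_subset_singleton hS)

lemma compOf_ncard_le_one {S : Set ℝ} (hS : IsPreconnected S) :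
    (componentsOf S).ncard ≤ 1 := by
  have := Set.ncard_le_ncard (compOf_subset_singleton hS) (Set.finite_singleton S)
  simpa using this

open scoped Classical in
/-- The injection used in `compOf_diff_convex`. -/
noncomputable def Fmap (A K : Set ℝ) (p : ℝ) : Set ℝ → Set ℝ := fun D =>
  if h : D.Nonempty then
    (if D ⊆ {t | ∀ k ∈ K, k < t} ∧ connectedComponentIn A h.some = connectedComponentIn A p
      then ∅ else connectedComponentIn A h.some)
  else ∅

open scoped Classical in
/-- Key counting lemma: removing a convex set `K` containing `p` from `A` increases the
number of connected components by at most one, and only if `p ∈ A`. -/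
lemma compOf_diff_convex {A K : Set ℝ} (hK : Convex ℝ K) {p : ℝ} (hp : p ∈ K)
    (hfin : (componentsOf A).Finite) :
    (componentsOf (A \ K)).Finite ∧
      (componentsOf (A \ K)).ncard ≤ (componentsOf A).ncard + (if p ∈ A then 1 else 0) := by
  classical
  set L : Set ℝ := {t | ∀ k ∈ K, t < k} with hL
  set R : Set ℝ := {t | ∀ k ∈ K, k < t} with hR
  have hside : ∀ t ∈ A \ K, t ∈ L ∨ t ∈ R := by
    intro t ht
    by_contra hcon
    push_neg at hcon
    obtain ⟨h1, h2⟩ := hcon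
    simp only [hL, Set.mem_setOf_eq, not_forall, not_lt, exists_prop] at h1
    simp only [hR, Set.mem_setOf_eq, not_forall, not_lt, exists_prop] at h2
    obtain ⟨k1, hk1, hk1'⟩ := h1
    obtain ⟨k2, hk2, hk2'⟩ := h2
    exact ht.2 (hK.ordConnected.out hk1 hk2 ⟨hk1', hk2'⟩)
  have hLK : ∀ t ∈ L, t ∉ K := fun t htL htK => lt_irrefl t (htL t htK)
  have hRK : ∀ t ∈ R, t ∉ K := fun t htR htK => lt_irrefl t (htR t htK)
  have hLord : L.OrdConnected := by
    constructor
    intro u hu v hv z hz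
    intro k hk
    exact lt_of_le_of_lt hz.2 (hv k hk)
  have hRord : R.OrdConnected := by
    constructor
    intro u hu v hv z hz
    intro k hk
    exact lt_of_lt_of_le (hu k hk) hz.1
  have hDside : ∀ D ∈ componentsOf (A \ K), D ⊆ L ∨ D ⊆ R := by
    intro D hD
    by_cases h : D ⊆ L
    · exact Or.inl h
    · right
      obtain ⟨u, huD, huL⟩ := Set.not_subset.mp h
      have huR : u ∈ R := (hside u (compOf_subset hD huD)).resolve_left huL
      intro v hvD
      rcases hside v (compOf_subset hD hvD) with hvL | hvR
      · exfalso
        have h1 : v < p := hvL p hp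
        have h2 : p < u := huR p hp
        have hpD : p ∈ D := (compOf_ordConnected hD).out hvD huD ⟨le_of_lt h1, le_of_lt h2⟩
        exact (compOf_subset hD hpD).2 hp
      · exact hvR
  -- same side and same ambient component imply equality
  have hsame : ∀ (W : Set ℝ), W.OrdConnected → (∀ t ∈ W, t ∉ K) →
      ∀ D1 ∈ componentsOf (A \ K), ∀ D2 ∈ componentsOf (A \ K), ∀ t1 ∈ D1, ∀ t2 ∈ D2,
      t1 ∈ W → t2 ∈ W →
      connectedComponentIn A t1 = connectedComponentIn A t2 → D1 = D2 := by
    intro W hWord hWK D1 hD1 D2 hD2 t1 ht1 t2 ht2 ht1W ht2W hcc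
    have ht1A : t1 ∈ A := (compOf_subset hD1 ht1).1
    have ht2A : t2 ∈ A := (compOf_subset hD2 ht2).1
    set E := connectedComponentIn A t1 ∩ W with hE
    have hEord : E.OrdConnected :=
      (isPreconnected_connectedComponentIn.ordConnected).inter hWord
    have hEsub : E ⊆ A \ K := fun z hz =>
      ⟨connectedComponentIn_subset A t1 hz.1, hWK z hz.2⟩
    have ht1E : t1 ∈ E := ⟨mem_connectedComponentIn ht1A, ht1W⟩
    have ht2E : t2 ∈ E := ⟨hcc ▸ mem_connectedComponentIn ht2A, ht2W⟩
    have hEc : E ⊆ connectedComponentIn (A \ K) t1 :=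
      (hEord.isPreconnected).subset_connectedComponentIn ht1E hEsub
    have h12 : t2 ∈ connectedComponentIn (A \ K) t1 := hEc ht2E
    rw [compOf_eq hD1 ht1, compOf_eq hD2 ht2]
    exact (connectedComponentIn_eq h12).symm ▸ rfl
  -- injectivity of Fmap
  have hinj : Set.InjOn (Fmap A K p) (componentsOf (A \ K)) := by
    intro D1 hD1 D2 hD2 hFeq
    have hne1 : D1.Nonempty := compOf_nonempty hD1
    have hne2 : D2.Nonempty := compOf_nonempty hD2
    have ht1 : hne1.some ∈ D1 := hne1.some_mem
    have ht2 : hne2.some ∈ D2 := hne2.some_mem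
    have ht1A : hne1.some ∈ A := (compOf_subset hD1 ht1).1
    have ht2A : hne2.some ∈ A := (compOf_subset hD2 ht2).1
    simp only [Fmap, dif_pos hne1, dif_pos hne2, ← hR] at hFeq
    by_cases c1 : D1 ⊆ R ∧ connectedComponentIn A hne1.some = connectedComponentIn A p <;>
      by_cases c2 : D2 ⊆ R ∧ connectedComponentIn A hne2.some = connectedComponentIn A p
    · exact hsame R hRord hRK D1 hD1 D2 hD2 hne1.some ht1 hne2.some ht2 (c1.1 ht1) (c2.1 ht2)
        (c1.2.trans c2.2.symm)
    · rw [if_pos c1, if_neg c2] at hFeq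
      have hmem := mem_connectedComponentIn ht2A
      rw [← hFeq] at hmem
      exact absurd hmem (Set.notMem_empty _)
    · rw [if_pos c2, if_neg c1] at hFeq
      have hmem := mem_connectedComponentIn ht1A
      rw [hFeq] at hmem
      exact absurd hmem (Set.notMem_empty _)
    · rw [if_neg c1, if_neg c2] at hFeq
      rcases hDside D1 hD1 with hS1 | hS1 <;> rcases hDside D2 hD2 with hS2 | hS2
      · exact hsame L hLord hLK D1 hD1 D2 hD2 hne1.some ht1 hne2.some ht2
          (hS1 ht1) (hS2 ht2) hFeq
      · exfalso
        have h1 : hne1.some < p := hS1 ht1 p hp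
        have h2 : p < hne2.some := hS2 ht2 p hp
        have hmem : hne2.some ∈ connectedComponentIn A hne1.some := by
          rw [hFeq]; exact mem_connectedComponentIn ht2A
        have hpmem : p ∈ connectedComponentIn A hne1.some :=
          (isPreconnected_connectedComponentIn.ordConnected).out
            (mem_connectedComponentIn ht1A) hmem ⟨le_of_lt h1, le_of_lt h2⟩
        exact c2 ⟨hS2, hFeq.symm.trans (connectedComponentIn_eq hpmem)⟩
      · exfalso
        have h1 : hne2.some < p := hS2 ht2 p hp
        have h2 : p < hne1.some := hS1 ht1 p hp
        have hmem : hne1.some ∈ connectedComponentIn A hne2.some := by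
          rw [← hFeq]; exact mem_connectedComponentIn ht1A
        have hpmem : p ∈ connectedComponentIn A hne2.some :=
          (isPreconnected_connectedComponentIn.ordConnected).out
            (mem_connectedComponentIn ht2A) hmem ⟨le_of_lt h1, le_of_lt h2⟩
        exact c1 ⟨hS1, hFeq.trans (connectedComponentIn_eq hpmem)⟩
      · exact hsame R hRord hRK D1 hD1 D2 hD2 hne1.some ht1 hne2.some ht2
          (hS1 ht1) (hS2 ht2) hFeq
  -- conclude
  have hmapento : ∀ D ∈ componentsOf (A \ K), Fmap A K p D ∈ insert ∅ (componentsOf A) := by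
    intro D hD
    have hne : D.Nonempty := compOf_nonempty hD
    simp only [Fmap, dif_pos hne]
    by_cases c : D ⊆ {t | ∀ k ∈ K, k < t} ∧
        connectedComponentIn A hne.some = connectedComponentIn A p
    · rw [if_pos c]; exact Set.mem_insert _ _
    · rw [if_neg c]
      exact Set.mem_insert_of_mem _ ⟨hne.some, (compOf_subset hD hne.some_mem).1, rfl⟩
  have htfin : (insert ∅ (componentsOf A)).Finite := hfin.insert ∅
  have hfin2 : (componentsOf (A \ K)).Finite := by
    apply Set.Finite.of_finite_image _ hinj
    exact htfin.subset (by rintro _ ⟨D, hD, rfl⟩; exact hmapento D hD)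
  refine ⟨hfin2, ?_⟩
  by_cases hpA : p ∈ A
  · rw [if_pos hpA]
    calc (componentsOf (A \ K)).ncard
        ≤ (insert ∅ (componentsOf A)).ncard :=
          Set.ncard_le_ncard_of_injOn _ hmapento hinj htfin
      _ ≤ (componentsOf A).ncard + 1 := Set.ncard_insert_le _ _
  · rw [if_neg hpA, add_zero]
    have hmap2 : ∀ D ∈ componentsOf (A \ K), Fmap A K p D ∈ componentsOf A := by
      intro D hD
      have hne : D.Nonempty := compOf_nonempty hD
      simp only [Fmap, dif_pos hne]
      have hcond : ¬(D ⊆ {t | ∀ k ∈ K, k < t} ∧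
          connectedComponentIn A hne.some = connectedComponentIn A p) := by
        rintro ⟨-, hceq⟩
        have hmem := mem_connectedComponentIn (compOf_subset hD hne.some_mem).1
        rw [hceq, connectedComponentIn_eq_empty hpA] at hmem
        exact Set.notMem_empty _ hmem
      rw [if_neg hcond]
      exact ⟨hne.some, (compOf_subset hD hne.some_mem).1, rfl⟩
    exact Set.ncard_le_ncard_of_injOn _ hmap2 hinj hfin

end Components

section Dominance

open Set

variable {n : ℕ} (x P : Fin n → ℝ)

/-- The set of points where station `i` strictly dominates all stations of `T`. -/
def Sdom (T : Finset (Fin n)) (i : Fin n) : Set ℝ :=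
  {t | ∀ j ∈ T, j ≠ i → P j * (t - x i) ^ 2 < P i * (t - x j) ^ 2}

lemma Sdom_disjoint {T : Finset (Fin n)} {i j : Fin n} (hi : i ∈ T) (hj : j ∈ T)
    (hij : i ≠ j) {t : ℝ} (h1 : t ∈ Sdom x P T i) (h2 : t ∈ Sdom x P T j) : False := by
  have := h1 j hj hij.symm
  have := h2 i hi hij
  linarith

lemma affine_convexOn (B C : ℝ) : ConvexOn ℝ Set.univ (fun t : ℝ => B * t + C) := by
  refine ⟨convex_univ, fun p _ q _ a b ha hb hab => ?_⟩
  simp only [smul_eq_mul]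
  exact le_of_eq (by linear_combination (-C) * hab)

lemma affine_concaveOn (B C : ℝ) : ConcaveOn ℝ Set.univ (fun t : ℝ => B * t + C) := by
  refine ⟨convex_univ, fun p _ q _ a b ha hb hab => ?_⟩
  simp only [smul_eq_mul]
  exact le_of_eq (by linear_combination C * hab)

lemma convexOn_quad (A B C : ℝ) (hA : 0 ≤ A) :
    ConvexOn ℝ Set.univ (fun t : ℝ => A * t ^ 2 + (B * t + C)) := by
  have h1 : ConvexOn ℝ Set.univ (fun t : ℝ => A * t ^ 2) := by
    have := (Even.convexOn_pow (even_two) : ConvexOn ℝ Set.univ fun x : ℝ => x ^ 2).smul hA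
    simpa [smul_eq_mul] using this
  exact h1.add (affine_convexOn B C)

lemma concaveOn_quad (A B C : ℝ) (hA : A ≤ 0) :
    ConcaveOn ℝ Set.univ (fun t : ℝ => A * t ^ 2 + (B * t + C)) := by
  have h1 : ConvexOn ℝ Set.univ (fun t : ℝ => (-A) * t ^ 2) := by
    have := (Even.convexOn_pow (even_two) : ConvexOn ℝ Set.univ fun x : ℝ => x ^ 2).smul
      (by linarith : (0:ℝ) ≤ -A)
    simpa [smul_eq_mul] using this
  have h2 : ConcaveOn ℝ Set.univ (fun t : ℝ => A * t ^ 2) := by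
    have h3 := h1.neg
    have h4 : (-fun t : ℝ => -A * t ^ 2) = fun t : ℝ => A * t ^ 2 := by
      funext t; simp
    rwa [h4] at h3
  exact h2.add (affine_concaveOn B C)

lemma convex_strict_superlevel (c d u v : ℝ) (h : c ≤ d) :
    Convex ℝ {t : ℝ | d * (t - u) ^ 2 < c * (t - v) ^ 2} := by
  have hc := (concaveOn_quad (c - d) (2 * (d * u - c * v)) (c * v ^ 2 - d * u ^ 2)
    (by linarith)).convex_gt 0
  have : {t : ℝ | d * (t - u) ^ 2 < c * (t - v) ^ 2} =
      {t ∈ Set.univ | 0 < (c - d) * t ^ 2 + (2 * (d * u - c * v) * t + (c * v ^ 2 - d * u ^ 2))} := by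
    ext t
    simp only [Set.mem_setOf_eq, Set.mem_univ, true_and]
    constructor <;> intro h' <;> nlinarith
  rw [this]
  exact hc

lemma convex_sublevel (c d u v : ℝ) (h : d ≤ c) :
    Convex ℝ {t : ℝ | c * (t - u) ^ 2 ≤ d * (t - v) ^ 2} := by
  have hc := (convexOn_quad (c - d) (2 * (d * v - c * u)) (c * u ^ 2 - d * v ^ 2)
    (by linarith)).convex_le 0
  have : {t : ℝ | c * (t - u) ^ 2 ≤ d * (t - v) ^ 2} =
      {t ∈ Set.univ | (c - d) * t ^ 2 + (2 * (d * v - c * u) * t + (c * u ^ 2 - d * v ^ 2)) ≤ 0} := by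
    ext t
    simp only [Set.mem_setOf_eq, Set.mem_univ, true_and]
    constructor <;> intro h' <;> nlinarith
  rw [this]
  exact hc

lemma Sdom_convex_of_min {T : Finset (Fin n)} {w : Fin n}
    (hw : ∀ i ∈ T, P w ≤ P i) : Convex ℝ (Sdom x P T w) := by
  have hS : Sdom x P T w =
      ⋂ j ∈ T, {t : ℝ | j ≠ w → P j * (t - x w) ^ 2 < P w * (t - x j) ^ 2} := by
    ext t; simp [Sdom, Set.mem_iInter]
  rw [hS]
  refine convex_iInter₂ fun j hj => ?_
  by_cases hjw : j = w
  · subst hjw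
    have : {t : ℝ | j ≠ j → P j * (t - x j) ^ 2 < P j * (t - x j) ^ 2} = Set.univ := by
      ext t; simp
    rw [this]; exact convex_univ
  · have : {t : ℝ | j ≠ w → P j * (t - x w) ^ 2 < P w * (t - x j) ^ 2} =
        {t : ℝ | P j * (t - x w) ^ 2 < P w * (t - x j) ^ 2} := by
      ext t; simp [hjw]
    rw [this]
    exact convex_strict_superlevel (P w) (P j) (x w) (x j) (hw j hj)

lemma Sdom_erase {T : Finset (Fin n)} {w i : Fin n} (hwT : w ∈ T) (hiT : i ∈ T)
    (hwi : w ≠ i) :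
    Sdom x P T i = Sdom x P (T.erase w) i \ {t | P i * (t - x w) ^ 2 ≤ P w * (t - x i) ^ 2} := by
  ext t
  simp only [Sdom, Set.mem_setOf_eq, Set.mem_diff, Finset.mem_erase, not_le]
  constructor
  · intro h
    exact ⟨fun j hj hji => h j hj.2 hji, h w hwT hwi⟩
  · rintro ⟨h1, h2⟩ j hj hji
    by_cases hjw : j = w
    · subst hjw; exact h2
    · exact h1 j ⟨hjw, hj⟩ hji

lemma voronoi_count (hP : ∀ j, 0 < P j) (T : Finset (Fin n)) :
    (∀ i ∈ T, (componentsOf (Sdom x P T i)).Finite) ∧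
      (∑ i ∈ T, (componentsOf (Sdom x P T i)).ncard) ≤ 2 * T.card - 1 := by
  classical
  induction T using Finset.strongInduction with
  | _ T ih =>
    rcases T.eq_empty_or_nonempty with rfl | hne
    · simp
    obtain ⟨w, hwT, hwmin⟩ := T.exists_min_image P hne
    set T' := T.erase w with hT'
    have hss : T' ⊂ T := Finset.erase_ssubset hwT
    obtain ⟨ihfin, ihsum⟩ := ih T' hss
    have hconvw : Convex ℝ (Sdom x P T w) := Sdom_convex_of_min x P hwmin
    have hfinw : (componentsOf (Sdom x P T w)).Finite :=
      compOf_finite_of_preconnected hconvw.isPreconnected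
    have hcardw : (componentsOf (Sdom x P T w)).ncard ≤ 1 :=
      compOf_ncard_le_one hconvw.isPreconnected
    have hstep : ∀ i ∈ T', (componentsOf (Sdom x P T i)).Finite ∧
        (componentsOf (Sdom x P T i)).ncard ≤ (componentsOf (Sdom x P T' i)).ncard +
          (if x w ∈ Sdom x P T' i then 1 else 0) := by
      intro i hi
      have hiT : i ∈ T := Finset.mem_of_mem_erase hi
      have hwi : w ≠ i := fun h => (Finset.ne_of_mem_erase hi) h.symm
      have hK : Convex ℝ {t : ℝ | P i * (t - x w) ^ 2 ≤ P w * (t - x i) ^ 2} :=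
        convex_sublevel _ _ _ _ (hwmin i hiT)
      have hpK : x w ∈ {t : ℝ | P i * (t - x w) ^ 2 ≤ P w * (t - x i) ^ 2} := by
        simp only [Set.mem_setOf_eq, sub_self]
        have := hP w
        nlinarith [sq_nonneg (x w - x i)]
      have hres := compOf_diff_convex hK hpK (ihfin i hi)
      rw [Sdom_erase x P hwT hiT hwi]
      exact hres
    constructor
    · intro i hi
      by_cases hiw : i = w
      · subst hiw; exact hfinw
      · exact (hstep i (Finset.mem_erase.mpr ⟨hiw, hi⟩)).1
    · have hsum1 : ∑ i ∈ T', (componentsOf (Sdom x P T i)).ncard +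
          (componentsOf (Sdom x P T w)).ncard =
          ∑ i ∈ T, (componentsOf (Sdom x P T i)).ncard :=
        Finset.sum_erase_add T _ hwT
      have hsum2 : ∑ i ∈ T', (componentsOf (Sdom x P T i)).ncard ≤
          ∑ i ∈ T', (componentsOf (Sdom x P T' i)).ncard +
            ∑ i ∈ T', (if x w ∈ Sdom x P T' i then 1 else 0) := by
        rw [← Finset.sum_add_distrib]
        exact Finset.sum_le_sum fun i hi => (hstep i hi).2
      have hfilter : ∑ i ∈ T', (if x w ∈ Sdom x P T' i then 1 else 0) ≤ 1 := by
        have heq : ∑ i ∈ T', (if x w ∈ Sdom x P T' i then 1 else 0) =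
            (T'.filter fun i => x w ∈ Sdom x P T' i).card := (Finset.card_filter _ _).symm
        rw [heq]
        refine Finset.card_le_one.mpr fun i hi j hj => ?_
        rw [Finset.mem_filter] at hi hj
        by_contra hij
        exact Sdom_disjoint x P hi.1 hj.1 hij hi.2 hj.2
      have hfilter0 : ∑ i ∈ T', (if x w ∈ Sdom x P T' i then 1 else 0) ≤ T'.card := by
        have heq : ∑ i ∈ T', (if x w ∈ Sdom x P T' i then 1 else 0) =
            (T'.filter fun i => x w ∈ Sdom x P T' i).card := (Finset.card_filter _ _).symm
        rw [heq]
        exact Finset.card_filter_le _ _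
      have hcard : T.card = T'.card + 1 := by
        rw [hT', Finset.card_erase_of_mem hwT]
        have := Finset.card_pos.mpr hne
        omega
      omega

end Dominance

section Zone

open Set

variable {n : ℕ} {x P : Fin n → ℝ} {N β : ℝ}

/-- Normalized total interference at `t`, scaled by `(t - x i)^2`. -/
noncomputable def Gfun (x P : Fin n → ℝ) (N β : ℝ) (i : Fin n) (t : ℝ) : ℝ :=
  β * ((∑ j ∈ Finset.univ.erase i, P j / (t - x j) ^ 2) + N) * (t - x i) ^ 2

lemma denom_pos (hn : 2 ≤ n) (hP : ∀ j, 0 < P j) (hN : 0 ≤ N)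
    {i : Fin n} {t : ℝ} (ht : ∀ j, j ≠ i → t ≠ x j) :
    0 < (∑ j ∈ Finset.univ.erase i, P j / (t - x j) ^ 2) + N := by
  have : Nontrivial (Fin n) := Fin.nontrivial_iff_two_le.mpr hn
  obtain ⟨j0, hj0⟩ := exists_ne i
  have hj0m : j0 ∈ Finset.univ.erase i := Finset.mem_erase.mpr ⟨hj0, Finset.mem_univ _⟩
  have hterm : 0 < P j0 / (t - x j0) ^ 2 := by
    have hne : t - x j0 ≠ 0 := sub_ne_zero.mpr (ht j0 hj0)
    exact div_pos (hP j0) (pow_two_pos_of_ne_zero hne)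
  have hsum : P j0 / (t - x j0) ^ 2 ≤ ∑ j ∈ Finset.univ.erase i, P j / (t - x j) ^ 2 :=
    Finset.single_le_sum (f := fun j => P j / (t - x j) ^ 2)
      (fun j _ => div_nonneg (hP j).le (sq_nonneg _)) hj0m
  linarith

lemma mem_recZone1_iff (hn : 2 ≤ n) (hP : ∀ j, 0 < P j) (hN : 0 ≤ N)
    {i : Fin n} {t : ℝ} (ht : ∀ j, j ≠ i → t ≠ x j) :
    t ∈ recZone1 x P N β i ↔ Gfun x P N β i t ≤ P i := by
  by_cases hti : t = x i
  · subst hti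
    have h0 : Gfun x P N β i (x i) = 0 := by simp [Gfun]
    constructor
    · intro _
      rw [h0]
      exact (hP i).le
    · intro _
      exact Set.mem_union_right _ rfl
  · have hD := denom_pos (x := x) (P := P) (N := N) hn hP hN ht
    have hti2 : (0:ℝ) < (t - x i) ^ 2 := pow_two_pos_of_ne_zero (sub_ne_zero.mpr hti)
    have htall : ∀ j, t ≠ x j := by
      intro j
      by_cases hji : j = i
      · subst hji; exact hti
      · exact ht j hji
    have hmem : t ∈ recZone1 x P N β i ↔ β ≤ sinr1 x P N i t := by
      simp only [recZone1, Set.mem_union, Set.mem_singleton_iff, Set.mem_setOf_eq]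
      constructor
      · rintro (⟨-, h⟩ | h)
        · exact h
        · exact absurd h hti
      · intro h; exact Or.inl ⟨htall, h⟩
    rw [hmem]
    unfold sinr1 Gfun
    rw [le_div_iff₀ hD, le_div_iff₀ hti2]

lemma recZone1_subset_Sdom (hn : 2 ≤ n) (hx : Function.Injective x) (hP : ∀ j, 0 < P j)
    (hN : 0 ≤ N) (hβ : 1 ≤ β) (hcase : 3 ≤ n ∨ 0 < N ∨ 1 < β) (i : Fin n) :
    recZone1 x P N β i ⊆ Sdom x P Finset.univ i := by
  intro t htz j _ hji
  by_cases hti : t = x i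
  · subst hti
    have hne : x i - x j ≠ 0 := sub_ne_zero.mpr fun hc => hji (hx hc).symm
    have h2 := pow_two_pos_of_ne_zero hne
    have h3 := hP i
    have h4 := hP j
    simp only [sub_self]
    nlinarith
  · rcases htz with hts | hts
    swap
    · exact absurd hts hti
    obtain ⟨htall, hs⟩ := hts
    have hD := denom_pos (x := x) (P := P) (N := N) (i := i) hn hP hN (fun k _ => htall k)
    have hti2 : (0:ℝ) < (t - x i) ^ 2 := pow_two_pos_of_ne_zero (sub_ne_zero.mpr hti)
    have htj2 : (0:ℝ) < (t - x j) ^ 2 := pow_two_pos_of_ne_zero (sub_ne_zero.mpr (htall j))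
    have hji' : j ≠ i := fun h => hji h
    have hjm : j ∈ Finset.univ.erase i := Finset.mem_erase.mpr ⟨hji', Finset.mem_univ _⟩
    have h1 : β * ((∑ k ∈ Finset.univ.erase i, P k / (t - x k) ^ 2) + N) ≤
        P i / (t - x i) ^ 2 := by
      have := (le_div_iff₀ hD).mp hs
      calc β * ((∑ k ∈ Finset.univ.erase i, P k / (t - x k) ^ 2) + N)
          = β * ((∑ k ∈ Finset.univ.erase i, P k / (t - x k) ^ 2) + N) := rfl
        _ ≤ P i / (t - x i) ^ 2 := by
            have h2 : β ≤ P i / (t - x i) ^ 2 / ((∑ k ∈ Finset.univ.erase i, P k / (t - x k) ^ 2) + N) := hs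
            rw [le_div_iff₀ hD] at h2
            exact h2
    obtain ⟨E, hE⟩ : ∃ E : ℝ, E = (∑ k ∈ (Finset.univ.erase i).erase j, P k / (t - x k) ^ 2) + N :=
      ⟨_, rfl⟩
    have hsplit : (∑ k ∈ Finset.univ.erase i, P k / (t - x k) ^ 2) + N =
        P j / (t - x j) ^ 2 + E := by
      rw [hE, ← Finset.sum_erase_add _ _ hjm]
      ring
    have hEnn : 0 ≤ E := by
      rw [hE]
      have hnn : ∀ k ∈ (Finset.univ.erase i).erase j, 0 ≤ P k / (t - x k) ^ 2 :=
        fun k _ => div_nonneg (hP k).le (sq_nonneg _)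
      have := Finset.sum_nonneg hnn
      linarith
    have hj2 : 0 < P j / (t - x j) ^ 2 := div_pos (hP j) htj2
    rw [hsplit] at h1
    have hor : 0 < E ∨ 1 < β := by
      rcases hcase with h3n | hNpos | hβ1
      · left
        have hcard : ((Finset.univ.erase i).erase j).card = n - 2 := by
          rw [Finset.card_erase_of_mem hjm, Finset.card_erase_of_mem (Finset.mem_univ i),
            Finset.card_univ, Fintype.card_fin]
          omega
        have hne3 : ((Finset.univ.erase i).erase j).Nonempty :=
          Finset.card_pos.mp (by omega)
        obtain ⟨k, hk⟩ := hne3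
        have hki : k ≠ i := Finset.mem_erase.mp (Finset.mem_erase.mp hk).2 |>.1
        have hterm : 0 < P k / (t - x k) ^ 2 :=
          div_pos (hP k) (pow_two_pos_of_ne_zero (sub_ne_zero.mpr (htall k)))
        have hsum : P k / (t - x k) ^ 2 ≤
            ∑ m ∈ (Finset.univ.erase i).erase j, P m / (t - x m) ^ 2 :=
          Finset.single_le_sum (f := fun m => P m / (t - x m) ^ 2)
            (fun m _ => div_nonneg (hP m).le (sq_nonneg _)) hk
        rw [hE]
        linarith
      · left; rw [hE]
        have hnn : ∀ k ∈ (Finset.univ.erase i).erase j, 0 ≤ P k / (t - x k) ^ 2 :=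
          fun k _ => div_nonneg (hP k).le (sq_nonneg _)
        have := Finset.sum_nonneg hnn
        linarith
      · right; exact hβ1
    have hlt : P j / (t - x j) ^ 2 < P i / (t - x i) ^ 2 := by
      have hexp : β * (P j / (t - x j) ^ 2 + E) =
          β * (P j / (t - x j) ^ 2) + β * E := by ring
      rw [hexp] at h1
      rcases hor with h | h
      · have hba : P j / (t - x j) ^ 2 ≤ β * (P j / (t - x j) ^ 2) :=
          le_mul_of_one_le_left hj2.le hβ
        have hbE : E ≤ β * E := le_mul_of_one_le_left hEnn hβ
        linarith
      · have hba : P j / (t - x j) ^ 2 < β * (P j / (t - x j) ^ 2) :=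
          lt_mul_of_one_lt_left hj2 h
        have hbE : 0 ≤ β * E := mul_nonneg (by linarith) hEnn
        linarith
    have := (div_lt_div_iff₀ htj2 hti2).mp hlt
    linarith

lemma x_not_mem_Sdom (hP : ∀ j, 0 < P j) (hx : Function.Injective x) {i j : Fin n}
    (hij : j ≠ i) : x j ∉ Sdom x P Finset.univ i := by
  intro h
  have := h j (Finset.mem_univ j) hij
  have h1 : (0:ℝ) < P j * (x j - x i) ^ 2 := by
    have h2 : x j - x i ≠ 0 := sub_ne_zero.mpr (fun hc => hij (hx hc))
    exact mul_pos (hP j) (pow_two_pos_of_ne_zero h2)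
  simp only [sub_self] at this
  nlinarith

lemma convexOn_finset_sum {ι : Type*} (t : Finset ι) {s : Set ℝ} (hs : Convex ℝ s)
    (f : ι → ℝ → ℝ) (h : ∀ i ∈ t, ConvexOn ℝ s (f i)) :
    ConvexOn ℝ s (fun x => ∑ i ∈ t, f i x) := by
  classical
  induction t using Finset.induction with
  | empty => simpa using convexOn_const 0 hs
  | insert _ _ hnm ih =>
      rename_i a t'
      simp only [Finset.sum_insert hnm]
      exact (h a (Finset.mem_insert_self a t')).add
        (ih fun i hi => h i (Finset.mem_insert_of_mem hi))

lemma zpow_neg_two_eq (v : ℝ) : v ^ (-2:ℤ) = (v ^ 2)⁻¹ := by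
  rw [zpow_neg, zpow_two, sq]

lemma neg_zpow_neg_two (v : ℝ) : (-v) ^ (-2:ℤ) = v ^ (-2:ℤ) := by
  rw [zpow_neg, zpow_neg, zpow_two, zpow_two]
  rw [neg_mul_neg]

lemma convexOn_affine_zpow {e f : ℝ} {S : Set ℝ} (hS : Convex ℝ S)
    (hsign : (∀ s ∈ S, 0 < e + f * s) ∨ (∀ s ∈ S, e + f * s < 0)) :
    ConvexOn ℝ S (fun s : ℝ => (e + f * s) ^ (-2:ℤ)) := by
  rcases hsign with hpos | hneg
  · have base : ConvexOn ℝ (Set.Ioi (0:ℝ)) (fun v : ℝ => v ^ (-2:ℤ)) := convexOn_zpow _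
    have hcomp := base.comp_affineMap (AffineMap.lineMap (e:ℝ) (e + f))
    have haff : ∀ s : ℝ, (AffineMap.lineMap (e:ℝ) (e + f)) s = e + f * s := by
      intro s
      simp [AffineMap.lineMap_apply]
      ring
    have hfun : ((fun v : ℝ => v ^ (-2:ℤ)) ∘ (AffineMap.lineMap (e:ℝ) (e + f))) =
        fun s : ℝ => (e + f * s) ^ (-2:ℤ) := by
      funext s
      simp only [Function.comp_apply, haff s]
    rw [hfun] at hcomp
    refine hcomp.subset (fun s hs => ?_) hS
    simp only [Set.mem_preimage, haff s, Set.mem_Ioi]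
    exact hpos s hs
  · have base : ConvexOn ℝ (Set.Ioi (0:ℝ)) (fun v : ℝ => v ^ (-2:ℤ)) := convexOn_zpow _
    have hcomp := base.comp_affineMap (AffineMap.lineMap (-e:ℝ) (-e + -f))
    have haff : ∀ s : ℝ, (AffineMap.lineMap (-e:ℝ) (-e + -f)) s = -(e + f * s) := by
      intro s
      simp [AffineMap.lineMap_apply]
      ring
    have hfun : ((fun v : ℝ => v ^ (-2:ℤ)) ∘ (AffineMap.lineMap (-e:ℝ) (-e + -f))) =
        fun s : ℝ => (e + f * s) ^ (-2:ℤ) := by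
      funext s
      simp only [Function.comp_apply, haff s]
      exact neg_zpow_neg_two _
    rw [hfun] at hcomp
    refine hcomp.subset (fun s hs => ?_) hS
    simp only [Set.mem_preimage, haff s, Set.mem_Ioi]
    have := hneg s hs
    linarith

/-- The right half of the main analytic lemma: the case `x i < a`. -/
lemma lemmaA_right (hn : 2 ≤ n) (hx : Function.Injective x) (hP : ∀ j, 0 < P j) (hN : 0 ≤ N)
    (hβ : 1 ≤ β) {i : Fin n} {a b : ℝ} (hab : a ≤ b) (hxa : x i < a)
    (hfree : ∀ j, j ≠ i → ∀ t ∈ Set.Icc a b, t ≠ x j)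
    (ha : a ∈ recZone1 x P N β i) (hb : b ∈ recZone1 x P N β i) :
    Set.Icc a b ⊆ recZone1 x P N β i := by
  intro c hc
  have hfa : ∀ j, j ≠ i → a ≠ x j := fun j hj => hfree j hj a (Set.left_mem_Icc.mpr hab)
  have hfb : ∀ j, j ≠ i → b ≠ x j := fun j hj => hfree j hj b (Set.right_mem_Icc.mpr hab)
  have hfc : ∀ j, j ≠ i → c ≠ x j := fun j hj => hfree j hj c hc
  have hGa : Gfun x P N β i a ≤ P i := (mem_recZone1_iff hn hP hN hfa).mp ha
  have hGb : Gfun x P N β i b ≤ P i := (mem_recZone1_iff hn hP hN hfb).mp hb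
  rw [mem_recZone1_iff hn hP hN hfc]
  -- set up the substitution s = (t - x i)⁻¹
  have ha' : 0 < a - x i := by linarith
  have hb' : 0 < b - x i := by linarith [hc.1, hc.2]
  have hc' : 0 < c - x i := by linarith [hc.1]
  set sa := (a - x i)⁻¹ with hsa_def
  set sb := (b - x i)⁻¹ with hsb_def
  have hsa : 0 < sa := inv_pos.mpr ha'
  have hsb : 0 < sb := inv_pos.mpr hb'
  have hba : sb ≤ sa := by
    rw [hsa_def, hsb_def]
    exact inv_anti₀ ha' (by linarith)
  set S := Set.Icc sb sa with hS_def
  have hSconv : Convex ℝ S := convex_Icc _ _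
  have hSpos : ∀ s ∈ S, 0 < s := fun s hs => lt_of_lt_of_le hsb hs.1
  have hinvmem : ∀ t ∈ Set.Icc a b, (t - x i)⁻¹ ∈ S := by
    intro t ht
    have ht' : 0 < t - x i := by linarith [ht.1]
    constructor
    · rw [hsb_def]
      exact inv_anti₀ ht' (by linarith [ht.2])
    · rw [hsa_def]
      exact inv_anti₀ ha' (by linarith [ht.1])
  have hmapIcc : ∀ s ∈ S, x i + s⁻¹ ∈ Set.Icc a b := by
    intro s hs
    have hspos := hSpos s hs
    constructor
    · have h1 : sa⁻¹ ≤ s⁻¹ := inv_anti₀ hspos hs.2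
      rw [hsa_def, inv_inv] at h1
      linarith
    · have h1 : s⁻¹ ≤ sb⁻¹ := inv_anti₀ hsb hs.1
      rw [hsb_def, inv_inv] at h1
      linarith
  -- constant sign of the affine factors
  have hsign : ∀ j, j ≠ i → ((∀ s ∈ S, 0 < 1 + (x i - x j) * s) ∨
      (∀ s ∈ S, 1 + (x i - x j) * s < 0)) := by
    intro j hji
    have hne : ∀ s ∈ S, 1 + (x i - x j) * s ≠ 0 := by
      intro s hs h0
      have hspos := hSpos s hs
      have hsne : s ≠ 0 := ne_of_gt hspos
      have hid : s * (x i + s⁻¹ - x j) = 1 + (x i - x j) * s := by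
        field_simp
        ring
      have htj := hfree j hji (x i + s⁻¹) (hmapIcc s hs)
      have : s * (x i + s⁻¹ - x j) = 0 := by rw [hid, h0]
      rcases mul_eq_zero.mp this with h | h
      · exact hsne h
      · exact htj (by linarith [sub_eq_zero.mp h])
    by_cases hall : ∀ s ∈ S, 0 < 1 + (x i - x j) * s
    · exact Or.inl hall
    · right
      push_neg at hall
      obtain ⟨s1, hs1S, hs1⟩ := hall
      have hs1' : 1 + (x i - x j) * s1 < 0 :=
        lt_of_le_of_ne hs1 (hne s1 hs1S)
      intro s hs
      by_contra hcon
      push_neg at hcon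
      have hs' : 0 < 1 + (x i - x j) * s :=
        lt_of_le_of_ne hcon (Ne.symm (hne s hs))
      have hcont : ContinuousOn (fun u : ℝ => 1 + (x i - x j) * u) (Set.uIcc s1 s) :=
        (continuous_const.add (continuous_const.mul continuous_id)).continuousOn
      have h0mem : (0:ℝ) ∈ Set.uIcc (1 + (x i - x j) * s1) (1 + (x i - x j) * s) :=
        Set.mem_uIcc.mpr (Or.inl ⟨le_of_lt hs1', le_of_lt hs'⟩)
      obtain ⟨s0, hs0mem, hs0⟩ := intermediate_value_uIcc hcont h0mem
      have hs0S : s0 ∈ S := by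
        have hsub : Set.uIcc s1 s ⊆ S := by
          rw [hS_def, ← Set.uIcc_of_le hba]
          exact Set.uIcc_subset_uIcc (by rw [Set.uIcc_of_le hba]; exact hs1S)
            (by rw [Set.uIcc_of_le hba]; exact hs)
        exact hsub hs0mem
      exact hne s0 hs0S hs0
  -- convexity of the substituted function
  set g : ℝ → ℝ := fun s =>
    (∑ j ∈ Finset.univ.erase i, β * P j * (1 + (x i - x j) * s) ^ (-2:ℤ)) +
      β * N * s ^ (-2:ℤ) with hg_def
  have hβ0 : (0:ℝ) ≤ β := by linarith
  have hconv : ConvexOn ℝ S g := by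
    refine ConvexOn.add ?_ ?_
    · refine convexOn_finset_sum _ hSconv _ (fun j hj => ?_)
      have hji : j ≠ i := (Finset.mem_erase.mp hj).1
      have hbase := convexOn_affine_zpow hSconv (hsign j hji)
      have := hbase.smul (mul_nonneg hβ0 (hP j).le)
      simpa [smul_eq_mul, mul_assoc] using this
    · have hbase : ConvexOn ℝ S (fun s : ℝ => s ^ (-2:ℤ)) :=
        (convexOn_zpow (-2)).subset (fun s hs => Set.mem_Ioi.mpr (hSpos s hs)) hSconv
      have := hbase.smul (mul_nonneg hβ0 hN)
      simpa [smul_eq_mul, mul_assoc] using this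
  -- value transfer
  have hval : ∀ t ∈ Set.Icc a b, g ((t - x i)⁻¹) = Gfun x P N β i t := by
    intro t ht
    have ht' : 0 < t - x i := by linarith [ht.1]
    have htne : t - x i ≠ 0 := ne_of_gt ht'
    have hterm : ∀ j ∈ Finset.univ.erase i,
        β * P j * (1 + (x i - x j) * (t - x i)⁻¹) ^ (-2:ℤ) =
          β * (P j / (t - x j) ^ 2) * (t - x i) ^ 2 := by
      intro j hj
      have hji : j ≠ i := (Finset.mem_erase.mp hj).1
      have htj : t - x j ≠ 0 := sub_ne_zero.mpr (hfree j hji t ht)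
      have harg : 1 + (x i - x j) * (t - x i)⁻¹ = (t - x j) / (t - x i) := by
        field_simp
        ring
      rw [harg, zpow_neg_two_eq, div_pow, inv_div]
      rw [div_eq_mul_inv, div_eq_mul_inv]
      ring
    have hsum : (∑ j ∈ Finset.univ.erase i, β * P j * (1 + (x i - x j) * (t - x i)⁻¹) ^ (-2:ℤ)) =
        ∑ j ∈ Finset.univ.erase i, β * (P j / (t - x j) ^ 2) * (t - x i) ^ 2 :=
      Finset.sum_congr rfl hterm
    have hnoise : β * N * ((t - x i)⁻¹) ^ (-2:ℤ) = β * N * (t - x i) ^ 2 := by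
      rw [zpow_neg_two_eq, inv_pow, inv_inv]
    rw [hg_def]
    simp only
    rw [hsum, hnoise]
    unfold Gfun
    have hexp : (∑ j ∈ Finset.univ.erase i, β * (P j / (t - x j) ^ 2) * (t - x i) ^ 2) =
        β * (∑ j ∈ Finset.univ.erase i, P j / (t - x j) ^ 2) * (t - x i) ^ 2 := by
      rw [Finset.mul_sum, Finset.sum_mul]
    rw [hexp]
    ring
  -- conclude by convexity
  have hscS : (c - x i)⁻¹ ∈ S := hinvmem c hc
  have hsaS : sa ∈ S := Set.right_mem_Icc.mpr hba
  have hsbS : sb ∈ S := Set.left_mem_Icc.mpr hba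
  have hseg : (c - x i)⁻¹ ∈ segment ℝ sb sa := by
    rw [segment_eq_Icc hba]
    exact hscS
  have hmax := hconv.le_on_segment hsbS hsaS hseg
  have hga : g sa = Gfun x P N β i a := hval a (Set.left_mem_Icc.mpr hab)
  have hgb : g sb = Gfun x P N β i b := hval b (Set.right_mem_Icc.mpr hab)
  have hgc : g ((c - x i)⁻¹) = Gfun x P N β i c := hval c hc
  rw [hgc, hga, hgb] at hmax
  calc Gfun x P N β i c ≤ max (Gfun x P N β i b) (Gfun x P N β i a) := hmax
    _ ≤ P i := max_le hGb hGa

lemma continuousAt_finset_sum {ι : Type*} (s : Finset ι) (f : ι → ℝ → ℝ) (a : ℝ)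
    (h : ∀ i ∈ s, ContinuousAt (f i) a) :
    ContinuousAt (fun t => ∑ i ∈ s, f i t) a := by
  classical
  induction s using Finset.induction with
  | empty => simpa using continuousAt_const
  | insert _ _ hnm ih =>
      rename_i b t'
      simp only [Finset.sum_insert hnm]
      exact (h b (Finset.mem_insert_self b t')).add
        (ih fun i hi => h i (Finset.mem_insert_of_mem hi))

lemma recZone1_neg_mem {i : Fin n} {t : ℝ} (h : t ∈ recZone1 x P N β i) :
    -t ∈ recZone1 (fun j => -(x j)) P N β i := by
  have hs : sinr1 (fun j => -(x j)) P N i (-t) = sinr1 x P N i t := by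
    unfold sinr1
    have h1 : (-t - -(x i)) ^ 2 = (t - x i) ^ 2 := by ring
    have h2 : ∀ j ∈ Finset.univ.erase i, P j / (-t - -(x j)) ^ 2 = P j / (t - x j) ^ 2 := by
      intro j _
      have : (-t - -(x j)) ^ 2 = (t - x j) ^ 2 := by ring
      rw [this]
    rw [h1, Finset.sum_congr rfl h2]
  rcases h with ⟨hall, hsinr⟩ | hsing
  · left
    refine ⟨fun j hc => hall j (neg_injective hc), ?_⟩
    rw [hs]; exact hsinr
  · right
    simp only [Set.mem_singleton_iff] at hsing ⊢
    rw [hsing]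

/-- The case `x i < c` of the main analytic lemma. -/
lemma lemmaA_point (hn : 2 ≤ n) (hx : Function.Injective x) (hP : ∀ j, 0 < P j) (hN : 0 ≤ N)
    (hβ : 1 ≤ β) {i : Fin n} {a b c : ℝ}
    (hfree : ∀ j, j ≠ i → ∀ t ∈ Set.Icc a b, t ≠ x j)
    (ha : a ∈ recZone1 x P N β i) (hb : b ∈ recZone1 x P N β i)
    (hc : c ∈ Set.Icc a b) (hci : x i < c) : c ∈ recZone1 x P N β i := by
  have hab : a ≤ b := le_trans hc.1 hc.2
  by_cases hxa : x i < a
  · exact lemmaA_right hn hx hP hN hβ hab hxa hfree ha hb hc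
  · push_neg at hxa
    -- continuity of Gfun at x i
    have hGcont : ContinuousAt (Gfun x P N β i) (x i) := by
      have hsumc : ContinuousAt
          (fun t => (∑ j ∈ Finset.univ.erase i, P j / (t - x j) ^ 2) + N) (x i) := by
        refine ContinuousAt.add ?_ continuousAt_const
        refine continuousAt_finset_sum _ _ _ (fun j hj => ?_)
        have hji : j ≠ i := (Finset.mem_erase.mp hj).1
        have hxji : x i ≠ x j := fun hc' => hji (hx hc'.symm)
        exact ContinuousAt.div continuousAt_const (by fun_prop) (by simp [sub_ne_zero, hxji])
      exact (continuousAt_const.mul hsumc).mul (by fun_prop)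
    have hG0 : Gfun x P N β i (x i) = 0 := by simp [Gfun]
    have hev : ∀ᶠ t in nhds (x i), Gfun x P N β i t < P i := by
      have := hGcont.tendsto
      rw [hG0] at this
      exact this.eventually_lt_const (hP i)
    obtain ⟨ε, hε, hball⟩ := Metric.eventually_nhds_iff.mp hev
    set a' := min c (x i + ε / 2) with ha'_def
    have hxa' : x i < a' := lt_min hci (by linarith)
    have ha'c : a' ≤ c := min_le_left _ _
    have ha'mem : a' ∈ Set.Icc a b := ⟨le_trans hxa (le_of_lt hxa'), le_trans ha'c hc.2⟩
    have hG' : Gfun x P N β i a' < P i := by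
      apply hball
      rw [Real.dist_eq, abs_of_pos (by linarith : (0:ℝ) < a' - x i)]
      have : a' ≤ x i + ε / 2 := min_le_right _ _
      linarith
    have hfa' : ∀ j, j ≠ i → a' ≠ x j := fun j hj => hfree j hj a' ha'mem
    have ha'Z : a' ∈ recZone1 x P N β i := (mem_recZone1_iff hn hP hN hfa').mpr hG'.le
    have hfree' : ∀ j, j ≠ i → ∀ t ∈ Set.Icc a' b, t ≠ x j := by
      intro j hj t ht
      exact hfree j hj t ⟨le_trans ha'mem.1 ht.1, ht.2⟩
    exact lemmaA_right hn hx hP hN hβ (le_trans ha'c hc.2) hxa' hfree' ha'Z hb ⟨ha'c, hc.2⟩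

/-- Main analytic lemma: reception is "between-closed" on intervals avoiding other stations. -/
lemma lemmaA (hn : 2 ≤ n) (hx : Function.Injective x) (hP : ∀ j, 0 < P j) (hN : 0 ≤ N)
    (hβ : 1 ≤ β) {i : Fin n} {a b : ℝ} (hab : a ≤ b)
    (hfree : ∀ j, j ≠ i → ∀ t ∈ Set.Icc a b, t ≠ x j)
    (ha : a ∈ recZone1 x P N β i) (hb : b ∈ recZone1 x P N β i) :
    Set.Icc a b ⊆ recZone1 x P N β i := by
  intro c hc
  rcases lt_trichotomy c (x i) with hlt | heq | hgt
  · -- reflect the configuration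
    set x' : Fin n → ℝ := fun j => -(x j) with hx'_def
    have hx' : Function.Injective x' := fun u v h => hx (neg_injective h)
    have hfree' : ∀ j, j ≠ i → ∀ t ∈ Set.Icc (-b) (-a), t ≠ x' j := by
      intro j hj t ht hc'
      have htmem : -t ∈ Set.Icc a b := ⟨by linarith [ht.2], by linarith [ht.1]⟩
      exact hfree j hj (-t) htmem (by rw [hc', hx'_def]; simp)
    have ha' : -a ∈ recZone1 x' P N β i := recZone1_neg_mem ha
    have hb' : -b ∈ recZone1 x' P N β i := recZone1_neg_mem hb
    have hc' : -c ∈ Set.Icc (-b) (-a) := ⟨by linarith [hc.2], by linarith [hc.1]⟩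
    have hci' : x' i < -c := by
      rw [hx'_def]
      simp only
      linarith
    have h1 : -c ∈ recZone1 x' P N β i :=
      lemmaA_point hn hx' hP hN hβ hfree' hb' ha' hc' hci'
    have h2 := recZone1_neg_mem h1
    have h3 : (fun j => -(x' j)) = x := by
      funext j
      rw [hx'_def]
      simp
    rw [h3, neg_neg] at h2
    exact h2
  · rw [heq]
    exact Set.mem_union_right _ rfl
  · exact lemmaA_point hn hx hP hN hβ hfree ha hb hc hgt

lemma zone_comp_count (hn : 2 ≤ n) (hx : Function.Injective x) (hP : ∀ j, 0 < P j)
    (hN : 0 ≤ N) (hβ : 1 ≤ β) (hcase : 3 ≤ n ∨ 0 < N ∨ 1 < β) (i : Fin n)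
    (hfinS : (componentsOf (Sdom x P Finset.univ i)).Finite) :
    (componentsOf (recZone1 x P N β i)).Finite ∧
      (componentsOf (recZone1 x P N β i)).ncard ≤
        (componentsOf (Sdom x P Finset.univ i)).ncard := by
  classical
  have hsub : recZone1 x P N β i ⊆ Sdom x P Finset.univ i :=
    recZone1_subset_Sdom hn hx hP hN hβ hcase i
  set Z := recZone1 x P N β i with hZ
  set S := Sdom x P Finset.univ i with hS
  set F : Set ℝ → Set ℝ := fun D =>
    if h : D.Nonempty then connectedComponentIn S h.some else ∅ with hF
  have hmap : ∀ D ∈ componentsOf Z, F D ∈ componentsOf S := by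
    intro D hD
    have hne : D.Nonempty := compOf_nonempty hD
    simp only [hF, dif_pos hne]
    exact ⟨hne.some, hsub (compOf_subset hD hne.some_mem), rfl⟩
  have hinj : Set.InjOn F (componentsOf Z) := by
    intro D1 hD1 D2 hD2 hFeq
    have hne1 : D1.Nonempty := compOf_nonempty hD1
    have hne2 : D2.Nonempty := compOf_nonempty hD2
    have ht1 : hne1.some ∈ D1 := hne1.some_mem
    have ht2 : hne2.some ∈ D2 := hne2.some_mem
    have ht1Z : hne1.some ∈ Z := compOf_subset hD1 ht1
    have ht2Z : hne2.some ∈ Z := compOf_subset hD2 ht2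
    simp only [hF, dif_pos hne1, dif_pos hne2] at hFeq
    have hmem2 : hne2.some ∈ connectedComponentIn S hne1.some := by
      rw [hFeq]; exact mem_connectedComponentIn (hsub ht2Z)
    have hmem1 : hne1.some ∈ connectedComponentIn S hne1.some :=
      mem_connectedComponentIn (hsub ht1Z)
    have key : ∀ u v : ℝ, u ≤ v → u ∈ Z → v ∈ Z →
        u ∈ connectedComponentIn S hne1.some → v ∈ connectedComponentIn S hne1.some →
        v ∈ connectedComponentIn Z u := by
      intro u v huv huZ hvZ humem hvmem
      have hIccS : Set.Icc u v ⊆ S := fun w hw =>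
        connectedComponentIn_subset S hne1.some
          ((isPreconnected_connectedComponentIn.ordConnected).out humem hvmem hw)
      have hfree : ∀ j, j ≠ i → ∀ w ∈ Set.Icc u v, w ≠ x j := by
        intro j hji w hw hc
        exact x_not_mem_Sdom hP hx hji (hS ▸ (hc ▸ hIccS hw))
      have hIccZ : Set.Icc u v ⊆ Z := lemmaA hn hx hP hN hβ huv hfree huZ hvZ
      exact (isPreconnected_Icc.subset_connectedComponentIn
        (Set.left_mem_Icc.mpr huv) hIccZ) (Set.right_mem_Icc.mpr huv)
    have h12 : connectedComponentIn Z hne1.some = connectedComponentIn Z hne2.some := by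
      rcases le_total hne1.some hne2.some with h | h
      · exact connectedComponentIn_eq (key hne1.some hne2.some h ht1Z ht2Z hmem1 hmem2)
      · exact (connectedComponentIn_eq (key hne2.some hne1.some h ht2Z ht1Z hmem2 hmem1)).symm
    exact (compOf_eq hD1 ht1).trans (h12.trans (compOf_eq hD2 ht2).symm)
  have hfin2 : (componentsOf Z).Finite := by
    apply Set.Finite.of_finite_image _ hinj
    exact hfinS.subset (by rintro _ ⟨D, hD, rfl⟩; exact hmap D hD)
  exact ⟨hfin2, Set.ncard_le_ncard_of_injOn _ hmap hinj hfinS⟩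

end Zone

section Degenerate

open Set

lemma deg_zone_eq (x P : Fin 2 → ℝ) (hx : Function.Injective x) (hP : ∀ j, 0 < P j)
    (i j : Fin 2) (hij : j ≠ i) :
    recZone1 x P 0 1 i = {t : ℝ | P j * (t - x i) ^ 2 ≤ P i * (t - x j) ^ 2} := by
  have hxij : x i ≠ x j := fun hc => hij (hx hc).symm
  have huniv : (Finset.univ.erase i) = {j} := by
    fin_cases i <;> fin_cases j <;> simp_all <;> rfl
  ext t
  by_cases hti : t = x i
  · subst hti
    simp only [Set.mem_setOf_eq, sub_self]
    constructor
    · intro _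
      have := pow_two_pos_of_ne_zero (sub_ne_zero.mpr hxij)
      have := (hP i)
      nlinarith
    · intro _
      exact Set.mem_union_right _ rfl
  · by_cases htj : t = x j
    · subst htj
      constructor
      · rintro (⟨hall, -⟩ | hsing)
        · exact absurd rfl (hall j)
        · exact absurd hsing hti
      · intro hmem
        exfalso
        simp only [Set.mem_setOf_eq, sub_self] at hmem
        have h1 := pow_two_pos_of_ne_zero (sub_ne_zero.mpr (fun hc : x j - x i = 0 =>
          hxij (sub_eq_zero.mp hc).symm))
        have := hP j
        nlinarith
    · have htall : ∀ k, t ≠ x k := by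
        intro k
        have hk : k = i ∨ k = j := by
          fin_cases i <;> fin_cases j <;> fin_cases k <;> simp_all
        rcases hk with rfl | rfl
        · exact hti
        · exact htj
      have hti2 : (0:ℝ) < (t - x i) ^ 2 := pow_two_pos_of_ne_zero (sub_ne_zero.mpr hti)
      have htj2 : (0:ℝ) < (t - x j) ^ 2 := pow_two_pos_of_ne_zero (sub_ne_zero.mpr htj)
      have hsinr : sinr1 x P 0 i t = (P i / (t - x i) ^ 2) / (P j / (t - x j) ^ 2) := by
        unfold sinr1
        rw [huniv, Finset.sum_singleton, add_zero]
      constructor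
      · rintro (⟨-, hs⟩ | hsing)
        · rw [hsinr] at hs
          have hjd : 0 < P j / (t - x j) ^ 2 := div_pos (hP j) htj2
          rw [le_div_iff₀ hjd, one_mul] at hs
          have := (div_le_div_iff₀ htj2 hti2).mp hs
          simpa [Set.mem_setOf_eq] using this
        · exact absurd hsing hti
      · intro hmem
        simp only [Set.mem_setOf_eq] at hmem
        left
        refine ⟨htall, ?_⟩
        rw [hsinr]
        have hjd : 0 < P j / (t - x j) ^ 2 := div_pos (hP j) htj2
        rw [le_div_iff₀ hjd, one_mul, div_le_div_iff₀ htj2 hti2]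
        linarith

lemma deg_main (x P : Fin 2 → ℝ) (hx : Function.Injective x) (hP : ∀ j, 0 < P j)
    (i j : Fin 2) (hij : j ≠ i) (hPle : P j ≤ P i) :
    (componentsOf (recZone1 x P 0 1 i)).Finite ∧
      (componentsOf (recZone1 x P 0 1 j)).Finite ∧
      (componentsOf (recZone1 x P 0 1 i)).ncard +
        (componentsOf (recZone1 x P 0 1 j)).ncard ≤ 3 := by
  have hzi := deg_zone_eq x P hx hP i j hij
  have hzj := deg_zone_eq x P hx hP j i (fun hc => hij hc.symm)
  -- zone j is convex
  have hconvj : Convex ℝ (recZone1 x P 0 1 j) := by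
    rw [hzj]
    exact convex_sublevel (P i) (P j) (x j) (x i) hPle
  have hfinj : (componentsOf (recZone1 x P 0 1 j)).Finite :=
    compOf_finite_of_preconnected hconvj.isPreconnected
  have hcardj : (componentsOf (recZone1 x P 0 1 j)).ncard ≤ 1 :=
    compOf_ncard_le_one hconvj.isPreconnected
  -- zone i is the complement of a convex set
  set K : Set ℝ := {t : ℝ | P i * (t - x j) ^ 2 < P j * (t - x i) ^ 2} with hK
  have hKconv : Convex ℝ K := convex_strict_superlevel (P j) (P i) (x j) (x i) hPle
  have hzi2 : recZone1 x P 0 1 i = Set.univ \ K := by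
    rw [hzi]
    ext t
    simp only [Set.mem_setOf_eq, Set.mem_diff, Set.mem_univ, true_and, hK, not_lt]
  have hfinuniv : (componentsOf (Set.univ : Set ℝ)).Finite :=
    compOf_finite_of_preconnected isPreconnected_univ
  have hcarduniv : (componentsOf (Set.univ : Set ℝ)).ncard ≤ 1 :=
    compOf_ncard_le_one isPreconnected_univ
  have hresi : (componentsOf (recZone1 x P 0 1 i)).Finite ∧
      (componentsOf (recZone1 x P 0 1 i)).ncard ≤ 2 := by
    rcases K.eq_empty_or_nonempty with hKe | ⟨p, hp⟩
    · rw [hzi2, hKe, Set.diff_empty]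
      exact ⟨hfinuniv, by linarith⟩
    · obtain ⟨hf, hc⟩ := compOf_diff_convex hKconv hp hfinuniv
      rw [hzi2]
      refine ⟨hf, ?_⟩
      rw [if_pos (Set.mem_univ p)] at hc
      omega
  exact ⟨hresi.1, hfinj, by omega⟩

end Degenerate

theorem total_number_of_cells_one_dimension {n : ℕ} (hn : 2 ≤ n)
    (x : Fin n → ℝ) (hx : Function.Injective x)
    (P : Fin n → ℝ) (hP : ∀ j, 0 < P j)
    (N β : ℝ) (hN : 0 ≤ N) (hβ : 1 ≤ β) :
    (∀ i, (componentsOf (recZone1 x P N β i)).Finite) ∧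
    (∑ i : Fin n, (componentsOf (recZone1 x P N β i)).ncard) ≤ 2 * n - 1 := by
  by_cases hcase : 3 ≤ n ∨ 0 < N ∨ 1 < β
  · obtain ⟨hfin, hcard⟩ := voronoi_count x P hP Finset.univ
    have hzone := fun i => zone_comp_count hn hx hP hN hβ hcase i (hfin i (Finset.mem_univ i))
    refine ⟨fun i => (hzone i).1, ?_⟩
    calc (∑ i : Fin n, (componentsOf (recZone1 x P N β i)).ncard)
        ≤ ∑ i : Fin n, (componentsOf (Sdom x P Finset.univ i)).ncard :=
          Finset.sum_le_sum fun i _ => (hzone i).2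
      _ ≤ 2 * n - 1 := by simpa using hcard
  · -- degenerate case : n = 2, N = 0, β = 1
    push_neg at hcase
    obtain ⟨hn3, hN0, hβ1⟩ := hcase
    have hn2 : n = 2 := by omega
    subst hn2
    have hNeq : N = 0 := le_antisymm hN0 hN
    have hβeq : β = 1 := le_antisymm hβ1 hβ
    subst hNeq hβeq
    rcases le_total (P 0) (P 1) with hle | hle
    · obtain ⟨hf1, hf0, hsum⟩ := deg_main x P hx hP 1 0 (by decide) hle
      constructor
      · intro i
        fin_cases i
        · exact hf0
        · exact hf1
      · rw [Fin.sum_univ_two]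
        omega
    · obtain ⟨hf0, hf1, hsum⟩ := deg_main x P hx hP 0 1 (by decide) hle
      constructor
      · intro i
        fin_cases i
        · exact hf0
        · exact hf1
      · rw [Fin.sum_univ_two]
        omega
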